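/- Let M_1 = (V, I_1), …, M_k = (V, I_k) be k matroids over a common finite ground set V, and suppose a partition (S'_1, …, S'_k) of S' with S'_i ∈ I_i is obtained from a partition (S_1, …, S_k) of S (with S_i ∈ I_i) by augmenting along a shortest (s, T)-path in the compressed exchange graph G(S_1, …, S_k) (so |S'| > |S|). Let d denote distance in G(S_1, …, S_k) and d' denote distance in G(S'_1, …, S'_k). Then for all v ∈ V: (i) if d(s, v) < d(s, T) then d'(s, v) ≥ d(s, v), and if d(v, T) < d(s, T) then d'(v, T) ≥ d(v, T); (ii) if d(s, v) ≥ d(s, T) then d'(s, v) ≥ d(s, T), and if d(v, T) ≥ d(s, T) then d'(v, T) ≥ d(s, T). -/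

import Mathlib

/-!
Along a shortest path `s, v₀, …, v_{n-1}, t_j` the exchanges `v_b → v_{b+1}` made inside one
part are triangular: `v_b → v_{c+1}` is never an arc for `b < c`, as it would shortcut the path.
So the fundamental circuit of `v_b` avoids all later `v_{c+1}`, the exchanges can be carried out
one at a time from the end of the path, and every new part is independent with the same span as
the old one.

The same triangularity shows that an arc `u → z` of the new graph whose tail lies in the span of
its part shortcuts an alternating walk `u → v_{a₁+1}, v_{a₁} → v_{a₂+1}, …, v_{aₖ} → z` of the
old graph (the first step may also be `u = v_{a₁+1}`, the last `z = v_{aₖ}`). The old distance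
from `s` grows by at most one along each old arc and drops by exactly one from `v_{a+1}` back to
`v_a`, so it grows by at most one along the new arc; symmetrically for the distance to `T`. A
tail outside the span of its part is adjacent to a sink, so its old distance from `s` is at least
`d(s, T) - 1`. Hence `min (d(s, ·), d(s, T))` grows by at most one along each new arc and
`min (d(·, T), d(s, T))` drops by at most one, which bounds the new distances from below.
-/
/-- A matroid on a finite ground set `V`, given by its family of independent sets. -/
structure FinMatroid (V : Type*) [DecidableEq V] [Fintype V] where
  Indep : Finset V → Prop
  indep_empty : Indep ∅
  indep_subset : ∀ ⦃S T : Finset V⦄, Indep S → T ⊆ S → Indep T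
  indep_aug : ∀ ⦃S T : Finset V⦄, Indep S → Indep T → T.card < S.card →
    ∃ x ∈ S \ T, Indep (insert x T)

/-- `S` is partitionable w.r.t. the matroids `M i`: it can be partitioned into
sets `P i` with `P i` independent in `M i`. -/
def Partitionable {V ι : Type*} [DecidableEq V] [Fintype V] [DecidableEq ι] [Fintype ι]
    (M : ι → FinMatroid V) (S : Finset V) : Prop :=
  ∃ P : ι → Finset V, (∀ i, (M i).Indep (P i)) ∧
    (∀ i j, i ≠ j → Disjoint (P i) (P j)) ∧ Finset.univ.biUnion P = S

/-- `reachIn Adj n x y` : there is a directed walk with exactly `n` edges from `x` to `y`. -/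
def reachIn {α : Type*} (Adj : α → α → Prop) : ℕ → α → α → Prop
  | 0, x, y => x = y
  | n + 1, x, y => ∃ z, Adj x z ∧ reachIn Adj n z y

/-- Distance (number of edges of a shortest directed path) from `x` to `y`; `⊤` if none. -/
noncomputable def ddist {α : Type*} (Adj : α → α → Prop) (x y : α) : ℕ∞ :=
  sInf {n : ℕ∞ | ∃ m : ℕ, n = (m : ℕ∞) ∧ reachIn Adj m x y}

/-- Vertices of the compressed exchange graph: ground elements, a source `src`,
and one sink `snk i` for each index `i`. -/
inductive CVert (V ι : Type*) where
  | elt : V → CVert V ι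
  | src : CVert V ι
  | snk : ι → CVert V ι

/-- The compressed exchange graph `G(S₁, …, S_k)` relative to the partition `P`. -/
def compAdj {V ι : Type*} [DecidableEq V] [Fintype V] [DecidableEq ι] [Fintype ι]
    (M : ι → FinMatroid V) (P : ι → Finset V) : CVert V ι → CVert V ι → Prop
  | CVert.elt v, CVert.elt u =>
      ∃ i, u ∈ P i ∧ ¬ (M i).Indep (insert v (P i)) ∧
        (M i).Indep (insert v ((P i).erase u))
  | CVert.src, CVert.elt v => v ∉ Finset.univ.biUnion P
  | CVert.elt v, CVert.snk i => v ∉ P i ∧ (M i).Indep (insert v (P i))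
  | _, _ => False

/-- The result of the procedure `Update`: augmenting the partition `P` along the path
`s, v₁, …, v_{l−1}, t_j`. -/
def updatePartition {V ι : Type*} [DecidableEq V] [DecidableEq ι]
    (P : ι → Finset V) (π : V → ι) (vs : List V) (hne : vs ≠ []) (j : ι) :
    ι → Finset V := fun i =>
  ((P i) \ (vs.tail.filter (fun v => π v = i)).toFinset)
    ∪ (((vs.zip vs.tail).filter (fun p => π p.2 = i)).map Prod.fst).toFinset
    ∪ (if i = j then {vs.getLast hne} else ∅)

section Walk

variable {α : Type*} {Adj : α → α → Prop} {x y z : α} {m n : ℕ}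

theorem reachIn_add (h₁ : reachIn Adj m x y) (h₂ : reachIn Adj n y z) :
    reachIn Adj (m + n) x z := by
  induction m generalizing x with
  | zero => cases h₁; simpa using h₂
  | succ m ih =>
    obtain ⟨w, hxw, hw⟩ := h₁
    rw [Nat.add_right_comm]
    exact ⟨w, hxw, ih hw⟩

theorem reachIn_one (h : Adj x y) : reachIn Adj 1 x y := ⟨y, h, rfl⟩

theorem List.IsChain.reachIn {l : List α} (hl : l.IsChain Adj) {k d : ℕ}
    (hkd : k + d < l.length) : _root_.reachIn Adj d l[k] l[k + d] := by
  induction d generalizing k with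
  | zero => rfl
  | succ d ih =>
    refine ⟨l[k + 1], List.isChain_iff_getElem.1 hl k (by omega), ?_⟩
    simpa only [Nat.add_right_comm, Nat.add_assoc] using ih (k := k + 1) (by omega)

theorem ddist_le_of_reachIn (h : reachIn Adj m x y) : ddist Adj x y ≤ m :=
  sInf_le ⟨m, rfl, h⟩

theorem exists_reachIn_of_ddist_ne_top (h : ddist Adj x y ≠ ⊤) :
    ∃ m : ℕ, reachIn Adj m x y ∧ ddist Adj x y = m := by
  have hne : {n : ℕ∞ | ∃ m : ℕ, n = m ∧ reachIn Adj m x y}.Nonempty := by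
    by_contra he
    exact h (by rw [ddist, Set.not_nonempty_iff_eq_empty.1 he, sInf_empty])
  obtain ⟨m, hm, hr⟩ := csInf_mem hne
  exact ⟨m, hr, hm⟩

theorem ddist_triangle : ddist Adj x z ≤ ddist Adj x y + ddist Adj y z := by
  by_cases h₁ : ddist Adj x y = ⊤
  · simp [h₁]
  by_cases h₂ : ddist Adj y z = ⊤
  · simp [h₂]
  obtain ⟨m, hm, hd₁⟩ := exists_reachIn_of_ddist_ne_top h₁
  obtain ⟨n, hn, hd₂⟩ := exists_reachIn_of_ddist_ne_top h₂
  rw [hd₁, hd₂]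
  exact_mod_cast ddist_le_of_reachIn (reachIn_add hm hn)

theorem ddist_le_add_one_of_adj_right (h : Adj y z) : ddist Adj x z ≤ ddist Adj x y + 1 :=
  ddist_triangle.trans (by gcongr; exact_mod_cast ddist_le_of_reachIn (reachIn_one h))

theorem ddist_le_add_one_of_adj_left (h : Adj x y) : ddist Adj x z ≤ ddist Adj y z + 1 :=
  ddist_triangle.trans (by
    rw [add_comm]; gcongr; exact_mod_cast ddist_le_of_reachIn (reachIn_one h))

theorem le_add_ddist {f : α → ℕ∞} (hf : ∀ a b, Adj a b → f b ≤ f a + 1) :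
    f y ≤ f x + ddist Adj x y := by
  have key : ∀ (n : ℕ) x, reachIn Adj n x y → f y ≤ f x + n := by
    intro n
    induction n with
    | zero => rintro x rfl; simp
    | succ n ih =>
      rintro x ⟨w, hxw, hw⟩
      calc f y ≤ f w + n := ih w hw
        _ ≤ f x + 1 + n := by gcongr; exact hf _ _ hxw
        _ = f x + (n + 1 : ℕ) := by push_cast; ring
  by_cases h : ddist Adj x y = ⊤
  · simp [h]
  obtain ⟨m, hm, hd⟩ := exists_reachIn_of_ddist_ne_top h
  exact hd ▸ key m x hm

theorem le_add_ddist' {f : α → ℕ∞} (hf : ∀ a b, Adj a b → f a ≤ f b + 1) :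
    f x ≤ f y + ddist Adj x y := by
  have key : ∀ (n : ℕ) x, reachIn Adj n x y → f x ≤ f y + n := by
    intro n
    induction n with
    | zero => rintro x rfl; simp
    | succ n ih =>
      rintro x ⟨w, hxw, hw⟩
      calc f x ≤ f w + 1 := hf _ _ hxw
        _ ≤ f y + n + 1 := by gcongr; exact ih w hw
        _ = f y + (n + 1 : ℕ) := by push_cast; ring
  by_cases h : ddist Adj x y = ⊤
  · simp [h]
  obtain ⟨m, hm, hd⟩ := exists_reachIn_of_ddist_ne_top h
  exact hd ▸ key m x hm

end Walk

theorem min_le_min_add_one {a b c : ℕ∞} (h : a ≤ b + 1 ∨ c ≤ b + 1) :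
    min a c ≤ min b c + 1 := by
  rw [← min_add_add_right]
  exact le_min (h.elim min_le_of_left_le min_le_of_right_le) ((min_le_right _ _).trans le_self_add)

theorem Set.sdiff_insert_union_insert {α : Type*} {I X Y : Set α} {e f : α} (hef : e ≠ f)
    (hfX : f ∉ X) :
    I \ insert f Y ∪ insert e X = insert e (I \ Y ∪ X) \ {f} := by
  ext v
  simp only [Set.mem_union, Set.mem_sdiff, Set.mem_insert_iff, Set.mem_singleton_iff]
  grind

namespace Matroid

open Set

variable {α κ : Type*} {M : Matroid α} {I : Set α} {e f u z : α}

def IsExchangeArc (M : Matroid α) (I : Set α) (e f : α) : Prop :=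
  f ∈ I ∧ ¬ M.Indep (insert e I) ∧ M.Indep (insert e (I \ {f}))

lemma Indep.isExchangeArc_iff (hI : M.Indep I) :
    M.IsExchangeArc I e f ↔ e ∈ M.closure I \ I ∧ f ∈ I ∧ f ∈ M.fundCircuit e I := by
  constructor
  · rintro ⟨hf, hdep, hind⟩
    have heI : e ∉ I := fun h => hdep (by rwa [insert_eq_of_mem h])
    have hecl : e ∈ M.closure I := by
      by_contra h
      exact hdep ((hI.insert_indep_iff_of_notMem heI).2 ⟨hind.subset_ground (mem_insert _ _), h⟩)
    refine ⟨⟨hecl, heI⟩, hf, (hI.mem_fundCircuit_iff hecl heI).2 ?_⟩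
    rwa [← insert_sdiff_singleton_comm (ne_of_mem_of_not_mem hf heI).symm]
  · rintro ⟨⟨hecl, heI⟩, hf, hfC⟩
    refine ⟨hf, fun h => ((hI.insert_indep_iff_of_notMem heI).1 h).2 hecl, ?_⟩
    rw [insert_sdiff_singleton_comm (ne_of_mem_of_not_mem hf heI).symm]
    exact (hI.mem_fundCircuit_iff hecl heI).1 hfC

theorem IsExchangeArc.of_insert (hI : M.Indep (insert e I)) (hu : u ∈ M.closure I)
    (huz : M.IsExchangeArc (insert e I) u z) : M.IsExchangeArc I u z := by
  have hI' := hI.subset (subset_insert e I)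
  obtain ⟨⟨-, hueI⟩, hzeI, hzC⟩ := hI.isExchangeArc_iff.1 huz
  have huI : u ∉ I := fun h => hueI (mem_insert_of_mem e h)
  have hCeq := (hI'.fundCircuit_isCircuit hu huI).eq_fundCircuit_of_subset hI
    ((M.fundCircuit_subset_insert u I).trans (insert_subset_insert (subset_insert e I)))
  have hzI : z ∈ I :=
    ((M.fundCircuit_subset_insert u I) (hCeq ▸ hzC)).resolve_left fun h => hueI (h ▸ hzeI)
  exact hI'.isExchangeArc_iff.2 ⟨⟨hu, huI⟩, hzI, hCeq ▸ hzC⟩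

section Triangular

variable [LinearOrder κ] {A : Finset κ} {x y : κ → α}

theorem Indep.indep_and_closure_eq_of_triangular (hI : M.Indep I)
    (harc : ∀ a ∈ A, M.IsExchangeArc I (x a) (y a))
    (htri : ∀ a ∈ A, ∀ b ∈ A, a < b → ¬ M.IsExchangeArc I (x a) (y b)) :
    M.Indep (I \ y '' A ∪ x '' A) ∧ M.closure (I \ y '' A ∪ x '' A) = M.closure I := by
  classical
  induction A using Finset.induction_on_min with
  | empty => simpa using hI
  | insert a s has ih =>
    have ha := Finset.mem_insert_self a s
    have hs : ∀ {b}, b ∈ s → b ∈ insert a s := Finset.mem_insert_of_mem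
    obtain ⟨hJ, hcl⟩ := ih (fun b hb => harc b (hs hb)) fun b hb c hc => htri b (hs hb) c (hs hc)
    set J := I \ y '' s ∪ x '' s
    obtain ⟨⟨hxcl, hxI⟩, hyI, hyC⟩ := hI.isExchangeArc_iff.1 (harc a ha)
    -- the fundamental circuit of `x a` avoids the later `y b`, so it survives their exchanges
    have hCJ : M.fundCircuit (x a) I ⊆ insert (x a) J := by
      intro c hc
      obtain rfl | hcI := M.fundCircuit_subset_insert _ _ hc
      · exact mem_insert _ _
      refine mem_insert_of_mem _ (Or.inl ⟨hcI, ?_⟩)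
      rintro ⟨b, hb, rfl⟩
      exact htri a ha b (hs hb) (has b hb) (hI.isExchangeArc_iff.2 ⟨⟨hxcl, hxI⟩, hcI, hc⟩)
    have hxJ : x a ∉ J := by
      rintro (⟨hxI', -⟩ | ⟨b, hb, hba⟩)
      · exact hxI hxI'
      · exact htri a ha b (hs hb) (has b hb) (hba ▸ harc b (hs hb))
    have hyX : y a ∉ x '' s := fun ⟨b, hb, hba⟩ =>
      (hI.isExchangeArc_iff.1 (harc b (hs hb))).1.2 (hba ▸ hyI)
    have hC := hI.fundCircuit_isCircuit hxcl hxI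
    have hCeq := hC.eq_fundCircuit_of_subset hJ hCJ
    have hxclJ : x a ∈ M.closure J := hcl ▸ hxcl
    rw [Finset.coe_insert, image_insert_eq, image_insert_eq,
      Set.sdiff_insert_union_insert (fun h : x a = y a => hxI (h ▸ hyI)) hyX]
    refine ⟨(hJ.mem_fundCircuit_iff hxclJ hxJ).1 (hCeq ▸ hyC), ?_⟩
    rw [closure_sdiff_singleton_eq_closure, closure_insert_eq_of_mem_closure hxclJ, hcl]
    exact M.closure_subset_closure (sdiff_subset_sdiff_left hCJ)
      (hC.mem_closure_sdiff_singleton_of_mem hyC)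

theorem Indep.mem_closure_of_triangular [WellFoundedLT κ] (hI : M.Indep I)
    (harc : ∀ a ∈ A, M.IsExchangeArc I (x a) (y a))
    (htri : ∀ a ∈ A, ∀ b ∈ A, a < b → ¬ M.IsExchangeArc I (x a) (y b)) {Q : κ → Prop}
    (hstep : ∀ a ∈ A, ∀ b ∈ A, Q b → M.IsExchangeArc I (x b) (y a) → Q a) {X : Set α}
    (hX : ∀ a ∈ A, Q a → M.fundCircuit (x a) I ∩ (I \ y '' A ∪ x '' A) ⊆ M.closure X) :
    ∀ a ∈ A, Q a → y a ∈ M.closure X := by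
  intro a
  induction a using WellFoundedLT.induction with
  | _ a ih =>
  intro ha hQa
  obtain ⟨⟨hxcl, hxI⟩, -, hyC⟩ := hI.isExchangeArc_iff.1 (harc a ha)
  have hC := hI.fundCircuit_isCircuit hxcl hxI
  refine M.closure_subset_closure_of_subset_closure ?_ (hC.mem_closure_sdiff_singleton_of_mem hyC)
  rintro c ⟨hcC, hca⟩
  by_cases hcJ : c ∈ I \ y '' A ∪ x '' A
  · exact hX a ha hQa ⟨hcC, hcJ⟩
  have hcI : c ∈ I :=
    (M.fundCircuit_subset_insert _ _ hcC).resolve_left fun h => hcJ (Or.inr ⟨a, ha, h.symm⟩)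
  obtain ⟨b, hb, rfl⟩ : c ∈ y '' A := of_not_not fun h => hcJ (Or.inl ⟨hcI, h⟩)
  have harc_ab : M.IsExchangeArc I (x a) (y b) := hI.isExchangeArc_iff.2 ⟨⟨hxcl, hxI⟩, hcI, hcC⟩
  have hba : b < a := lt_of_le_of_ne (not_lt.1 fun h => htri a ha b hb h harc_ab)
    fun h => hca (h ▸ rfl)
  exact ih b hba hb (hstep b hb a ha hQa harc_ab)

/-- The indices `a` reached from `u` by alternating walks `u → y a₁, x a₁ → y a₂, …, x aₖ₋₁ → y a`
of arcs at `I` (the first step may also be `u = y a₁`) satisfy every `Q` closed under `hbase` and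
`hstep`. -/
theorem Indep.isExchangeArc_or_of_triangular [WellFoundedLT κ] (hI : M.Indep I)
    (harc : ∀ a ∈ A, M.IsExchangeArc I (x a) (y a))
    (htri : ∀ a ∈ A, ∀ b ∈ A, a < b → ¬ M.IsExchangeArc I (x a) (y b))
    (huz : M.IsExchangeArc (I \ y '' A ∪ x '' A) u z) {Q : κ → Prop}
    (hbase : ∀ a ∈ A, M.IsExchangeArc I u (y a) ∨ u = y a → Q a)
    (hstep : ∀ a ∈ A, ∀ b ∈ A, Q b → M.IsExchangeArc I (x b) (y a) → Q a) :
    M.IsExchangeArc I u z ∨ ∃ a ∈ A, Q a ∧ (z = x a ∨ M.IsExchangeArc I (x a) z) := by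
  set J := I \ y '' A ∪ x '' A
  obtain ⟨hJ, hcl⟩ := hI.indep_and_closure_eq_of_triangular harc htri
  set X := {v ∈ J | M.IsExchangeArc I u v ∨ ∃ a ∈ A, Q a ∧ v ∈ M.fundCircuit (x a) I}
  have hXJ : X ⊆ J := sep_subset _ _
  have hX : X ⊆ M.E := hXJ.trans hJ.subset_ground
  have hyX := hI.mem_closure_of_triangular harc htri hstep (X := X)
    fun a ha hQ c ⟨hcC, hcJ⟩ => M.mem_closure_of_mem ⟨hcJ, Or.inr ⟨a, ha, hQ, hcC⟩⟩
  obtain ⟨⟨hucl, huJ⟩, hzJ, hzC⟩ := hJ.isExchangeArc_iff.1 huz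
  have huX : u ∈ M.closure X := by
    by_cases huI : u ∈ I
    · obtain ⟨p, hp, rfl⟩ : u ∈ y '' A := of_not_not fun h => huJ (Or.inl ⟨huI, h⟩)
      exact hyX p hp (hbase p hp (Or.inr rfl))
    have hucl' : u ∈ M.closure I := hcl ▸ hucl
    have hC := hI.fundCircuit_isCircuit hucl' huI
    refine M.closure_subset_closure_of_subset_closure ?_
      (hC.mem_closure_sdiff_singleton_of_mem (M.mem_fundCircuit u I))
    rintro c ⟨hcC, hcu⟩
    have hcI : c ∈ I := (M.fundCircuit_subset_insert _ _ hcC).resolve_left hcu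
    have harc_uc : M.IsExchangeArc I u c := hI.isExchangeArc_iff.2 ⟨⟨hucl', huI⟩, hcI, hcC⟩
    by_cases hcJ : c ∈ J
    · exact M.mem_closure_of_mem ⟨hcJ, Or.inl harc_uc⟩
    obtain ⟨b, hb, rfl⟩ : c ∈ y '' A := of_not_not fun h => hcJ (Or.inl ⟨hcI, h⟩)
    exact hyX b hb (hbase b hb (Or.inl harc_uc))
  have hCX := (hJ.subset hXJ).fundCircuit_isCircuit huX fun h => huJ (hXJ h)
  have hCeq := hCX.eq_fundCircuit_of_subset hJ
    ((M.fundCircuit_subset_insert u X).trans (insert_subset_insert hXJ))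
  obtain ⟨-, hz | ⟨a, ha, hQ, hzC'⟩⟩ : z ∈ X :=
    ((M.fundCircuit_subset_insert u X) (hCeq ▸ hzC)).resolve_left fun h => huJ (h ▸ hzJ)
  · exact Or.inl hz
  obtain ⟨⟨hxcl, hxI⟩, -, -⟩ := hI.isExchangeArc_iff.1 (harc a ha)
  rcases M.fundCircuit_subset_insert _ _ hzC' with h | hzI
  · exact Or.inr ⟨a, ha, hQ, Or.inl h⟩
  · exact Or.inr ⟨a, ha, hQ, Or.inr (hI.isExchangeArc_iff.2 ⟨⟨hxcl, hxI⟩, hzI, hzC'⟩)⟩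

theorem IsExchangeArc.le_add_one_of_triangular [WellFoundedLT κ] (hI : M.Indep I)
    (harc : ∀ a ∈ A, M.IsExchangeArc I (x a) (y a))
    (htri : ∀ a ∈ A, ∀ b ∈ A, a < b → ¬ M.IsExchangeArc I (x a) (y b))
    (huz : M.IsExchangeArc (I \ y '' A ∪ x '' A) u z) {φ : α → ℕ∞}
    (hφ : ∀ e f, M.IsExchangeArc I e f → φ f ≤ φ e + 1)
    (hφA : ∀ a ∈ A, φ (x a) + 1 ≤ φ (y a)) :
    φ z ≤ φ u + 1 := by
  obtain h | ⟨a, ha, hQ, rfl | h⟩ := hI.isExchangeArc_or_of_triangular harc htri huz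
    (Q := fun a => φ (y a) ≤ φ u + 1)
    (fun a _ h => h.elim (hφ _ _) fun h => h ▸ le_self_add)
    (fun a _ b hb hQ hba => (hφ _ _ hba).trans ((hφA b hb).trans hQ))
  · exact hφ _ _ h
  · exact le_self_add.trans ((hφA a ha).trans hQ)
  · exact (hφ _ _ h).trans ((hφA a ha).trans hQ)

theorem IsExchangeArc.le_add_one_of_triangular' [WellFoundedLT κ] (hI : M.Indep I)
    (harc : ∀ a ∈ A, M.IsExchangeArc I (x a) (y a))
    (htri : ∀ a ∈ A, ∀ b ∈ A, a < b → ¬ M.IsExchangeArc I (x a) (y b))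
    (huz : M.IsExchangeArc (I \ y '' A ∪ x '' A) u z) {ψ : α → ℕ∞}
    (hψ : ∀ e f, M.IsExchangeArc I e f → ψ e ≤ ψ f + 1)
    (hψA : ∀ a ∈ A, ψ (y a) + 1 ≤ ψ (x a)) :
    ψ u ≤ ψ z + 1 := by
  obtain h | ⟨a, ha, hQ, rfl | h⟩ := hI.isExchangeArc_or_of_triangular harc htri huz
    (Q := fun a => ψ u ≤ ψ (x a))
    (fun a ha h => (h.elim (hψ _ _) fun h => h ▸ le_self_add).trans (hψA a ha))
    (fun a ha b _ hQ hba => hQ.trans ((hψ _ _ hba).trans (hψA a ha)))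
  · exact hψ _ _ h
  · exact hQ.trans le_self_add
  · exact hQ.trans (hψ _ _ h)

end Triangular

end Matroid

namespace FinMatroid

variable {V : Type*} [DecidableEq V] [Fintype V] (M : FinMatroid V)

def toMatroid : Matroid V :=
  (IndepMatroid.ofFinset Set.univ M.Indep M.indep_empty (fun _ _ hJ hIJ => M.indep_subset hJ hIJ)
    (fun _ _ hI hJ hlt => by
      obtain ⟨e, he, hi⟩ := M.indep_aug hJ hI hlt
      exact ⟨e, (Finset.mem_sdiff.1 he).1, (Finset.mem_sdiff.1 he).2, hi⟩)
    (fun _ _ => Set.subset_univ _)).matroid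

variable {M} {S : Finset V} {e f : V}

@[simp] lemma toMatroid_indep_coe : M.toMatroid.Indep ↑S ↔ M.Indep S := by simp [toMatroid]

@[simp] lemma toMatroid_ground : M.toMatroid.E = Set.univ := rfl

lemma toMatroid_isExchangeArc_coe_iff : M.toMatroid.IsExchangeArc ↑S e f ↔
    f ∈ S ∧ ¬ M.Indep (insert e S) ∧ M.Indep (insert e (S.erase f)) := by
  simp only [Matroid.IsExchangeArc, Finset.mem_coe, ← Finset.coe_insert, ← Finset.coe_erase,
    toMatroid_indep_coe]

lemma notMem_toMatroid_closure_coe_iff (hS : M.Indep S) :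
    e ∉ M.toMatroid.closure ↑S ↔ e ∉ S ∧ M.Indep (insert e S) := by
  rw [(toMatroid_indep_coe.2 hS).notMem_closure_iff (by simp), ← Finset.coe_insert,
    toMatroid_indep_coe, Finset.mem_coe, and_comm]

end FinMatroid

section Path

open Finset

variable {V ι : Type*}

def pathVert (vs : List V) (hne : vs ≠ []) (b : ℕ) : V := vs.getD b (vs.head hne)

/-- The indices `b` of the path arcs `v_b → v_{b+1}` that exchange inside the part `i`. -/
def pathIdx [DecidableEq ι] (π : V → ι) (vs : List V) (hne : vs ≠ []) (i : ι) : Finset ℕ :=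
  (range (vs.length - 1)).filter fun b => π (pathVert vs hne (b + 1)) = i

def exchangedPart [DecidableEq V] [DecidableEq ι] (P : ι → Finset V) (π : V → ι) (vs : List V)
    (hne : vs ≠ []) (i : ι) : Set V :=
  ↑(P i) \ (fun b => pathVert vs hne (b + 1)) '' ↑(pathIdx π vs hne i) ∪
    pathVert vs hne '' ↑(pathIdx π vs hne i)

variable {π : V → ι} {vs : List V} {hne : vs ≠ []}

lemma pathVert_eq_getElem {b : ℕ} (hb : b < vs.length) : pathVert vs hne b = vs[b] :=
  List.getD_eq_getElem _ _ hb

variable [DecidableEq ι]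

lemma lt_of_mem_pathIdx {b : ℕ} {i : ι} (hb : b ∈ pathIdx π vs hne i) : b + 1 < vs.length := by
  have := mem_range.1 (mem_filter.1 hb).1
  omega

variable [DecidableEq V]

lemma toFinset_filter_tail (i : ι) :
    (vs.tail.filter fun v => π v = i).toFinset =
      (pathIdx π vs hne i).image fun b => pathVert vs hne (b + 1) := by
  ext v
  simp only [List.mem_toFinset, List.mem_filter, decide_eq_true_eq]
  simp only [List.mem_iff_getElem, List.length_tail, List.getElem_tail, mem_image, pathIdx,
    mem_filter, mem_range]
  constructor
  · rintro ⟨⟨b, hb, rfl⟩, hπ⟩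
    exact ⟨b, ⟨hb, by rwa [pathVert_eq_getElem]⟩, pathVert_eq_getElem _⟩
  · rintro ⟨b, ⟨hb, hπ⟩, rfl⟩
    rw [pathVert_eq_getElem (by omega)] at hπ ⊢
    exact ⟨⟨b, hb, rfl⟩, hπ⟩

lemma toFinset_map_fst_filter_zip_tail (i : ι) :
    (((vs.zip vs.tail).filter fun p => π p.2 = i).map Prod.fst).toFinset =
      (pathIdx π vs hne i).image (pathVert vs hne) := by
  ext v
  simp only [List.mem_toFinset, List.mem_map, List.mem_filter, decide_eq_true_eq]
  simp only [List.mem_iff_getElem, List.length_zip, List.length_tail, List.getElem_zip,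
    List.getElem_tail, mem_image, pathIdx, mem_filter, mem_range]
  constructor
  · rintro ⟨_, ⟨⟨b, hb, rfl⟩, hπ⟩, rfl⟩
    exact ⟨b, ⟨by omega, by rwa [pathVert_eq_getElem]⟩, pathVert_eq_getElem _⟩
  · rintro ⟨b, ⟨hb, hπ⟩, rfl⟩
    rw [pathVert_eq_getElem (by omega)] at hπ
    exact ⟨_, ⟨⟨b, by omega, rfl⟩, hπ⟩, (pathVert_eq_getElem _).symm⟩

variable {P : ι → Finset V} {j : ι}

lemma coe_updatePartition (i : ι) :
    (↑(updatePartition P π vs hne j i) : Set V) =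
      exchangedPart P π vs hne i ∪ if i = j then {vs.getLast hne} else ∅ := by
  rw [updatePartition, toFinset_filter_tail, toFinset_map_fst_filter_zip_tail, exchangedPart]
  split_ifs <;> push_cast <;> rfl

lemma mem_biUnion_updatePartition [Fintype ι] {v : V} (hv : v ∈ univ.biUnion P) :
    v ∈ univ.biUnion (updatePartition P π vs hne j) := by
  obtain ⟨i, -, hvi⟩ := mem_biUnion.1 hv
  suffices ∃ i, v ∈ (↑(updatePartition P π vs hne j i) : Set V) by simpa using this
  simp only [coe_updatePartition]
  by_cases hvJ : v ∈ exchangedPart P π vs hne i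
  · exact ⟨i, Or.inl hvJ⟩
  obtain ⟨b, hb, rfl⟩ : v ∈ (fun b => pathVert vs hne (b + 1)) '' ↑(pathIdx π vs hne i) :=
    of_not_not fun hv => hvJ (Or.inl ⟨hvi, hv⟩)
  have hb' := lt_of_mem_pathIdx hb
  by_cases hlast : b + 2 < vs.length
  · refine ⟨π (pathVert vs hne (b + 2)), Or.inl (Or.inr ⟨b + 1, ?_, rfl⟩)⟩
    exact mem_filter.2 ⟨mem_range.2 (by omega), rfl⟩
  · refine ⟨j, Or.inr ?_⟩
    rw [if_pos rfl, Set.mem_singleton_iff, List.getLast_eq_getElem]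
    change pathVert vs hne (b + 1) = _
    rw [pathVert_eq_getElem hb']
    congr 1
    omega

end Path

section Augmentation

open CVert

variable {V ι : Type*} [DecidableEq V] [Fintype V] [DecidableEq ι] [Fintype ι]

structure IsShortestAugPath (M : ι → FinMatroid V) (P : ι → Finset V) (π : V → ι) (j : ι)
    (vs : List V) : Prop where
  indep : ∀ i, (M i).Indep (P i)
  eq_of_mem : ∀ i, ∀ v ∈ P i, π v = i
  isChain : List.IsChain (compAdj M P) (src :: (vs.map elt ++ [snk j]))
  iInf_ddist_src_snk : (⨅ i, ddist (compAdj M P) src (snk i)) = ((vs.length + 1 : ℕ) : ℕ∞)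

variable {M : ι → FinMatroid V} {P : ι → Finset V} {π : V → ι} {j i : ι} {vs : List V}
  {hne : vs ≠ []} {u z : V}

lemma compAdj_elt_elt_iff :
    compAdj M P (elt u) (elt z) ↔ ∃ i, (M i).toMatroid.IsExchangeArc ↑(P i) u z := by
  simp only [compAdj, FinMatroid.toMatroid_isExchangeArc_coe_iff]

lemma compAdj_elt_snk_iff (hP : (M i).Indep (P i)) :
    compAdj M P (elt u) (snk i) ↔ u ∉ (M i).toMatroid.closure ↑(P i) := by
  rw [FinMatroid.notMem_toMatroid_closure_coe_iff hP]
  rfl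

lemma compAdj_src_of_updatePartition {v : V}
    (hv : compAdj M (updatePartition P π vs hne j) src (elt v)) : compAdj M P src (elt v) :=
  fun hvP => hv (mem_biUnion_updatePartition hvP)

namespace IsShortestAugPath

variable (h : IsShortestAugPath M P π j vs)
include h

lemma reachIn_src_pathVert {b : ℕ} (hb : b < vs.length) :
    reachIn (compAdj M P) (b + 1) src (elt (pathVert vs hne b)) := by
  have := h.isChain.reachIn (k := 0) (d := b + 1) (by simp; omega)
  simpa [pathVert_eq_getElem hb, List.getElem_append_left, hb] using this

lemma reachIn_pathVert_snk {b : ℕ} (hb : b < vs.length) :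
    reachIn (compAdj M P) (vs.length - b) (elt (pathVert vs hne b)) (snk j) := by
  have := h.isChain.reachIn (k := b + 1) (d := vs.length - b) (by simp; omega)
  simp only [show b + 1 + (vs.length - b) = vs.length + 1 by omega] at this
  simpa [pathVert_eq_getElem hb, List.getElem_append_left, hb] using this

lemma compAdj_pathVert {b : ℕ} (hb : b + 1 < vs.length) :
    compAdj M P (elt (pathVert vs hne b)) (elt (pathVert vs hne (b + 1))) := by
  have hb' : b < vs.length := by omega
  have := h.isChain.reachIn (k := b + 1) (d := 1) (by simp; omega)
  simpa [pathVert_eq_getElem hb, pathVert_eq_getElem hb', List.getElem_append_left, hb, hb',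
    reachIn] using this

lemma compAdj_getLast : compAdj M P (elt (vs.getLast hne)) (snk j) := by
  have hn := List.length_pos_iff.2 hne
  have := h.reachIn_pathVert_snk (hne := hne) (b := vs.length - 1) (by omega)
  rw [show vs.length - (vs.length - 1) = 1 by omega, pathVert_eq_getElem (by omega),
    ← List.getLast_eq_getElem] at this
  obtain ⟨_, hadj, rfl⟩ := this
  exact hadj

lemma le_ddist_add_iInf_ddist (v : CVert V ι) :
    ((vs.length + 1 : ℕ) : ℕ∞) ≤
      ddist (compAdj M P) src v + ⨅ i, ddist (compAdj M P) v (snk i) := by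
  rw [← h.iInf_ddist_src_snk, ENat.add_iInf]
  exact iInf_mono fun i => ddist_triangle

lemma ddist_pathVert {b : ℕ} (hb : b < vs.length) :
    ddist (compAdj M P) src (elt (pathVert vs hne b)) = (b + 1 : ℕ) ∧
      (⨅ i, ddist (compAdj M P) (elt (pathVert vs hne b)) (snk i)) = (vs.length - b : ℕ) := by
  have h₁ := ddist_le_of_reachIn (h.reachIn_src_pathVert (hne := hne) hb)
  have h₂ : (⨅ i, ddist (compAdj M P) (elt (pathVert vs hne b)) (snk i)) ≤ (vs.length - b : ℕ) :=
    (iInf_le _ j).trans (ddist_le_of_reachIn (h.reachIn_pathVert_snk (hne := hne) hb))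
  have h₃ := h.le_ddist_add_iInf_ddist (elt (pathVert vs hne b))
  generalize ddist (compAdj M P) src (elt (pathVert vs hne b)) = s at *
  generalize (⨅ i, ddist (compAdj M P) (elt (pathVert vs hne b)) (snk i)) = t at *
  lift s to ℕ using ne_top_of_le_ne_top (by simp) h₁
  lift t to ℕ using ne_top_of_le_ne_top (by simp) h₂
  norm_cast at *
  omega

lemma isExchangeArc_pathVert {b : ℕ} (hb : b ∈ pathIdx π vs hne i) :
    (M i).toMatroid.IsExchangeArc ↑(P i) (pathVert vs hne b) (pathVert vs hne (b + 1)) := by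
  obtain ⟨i', harc⟩ := compAdj_elt_elt_iff.1 (h.compAdj_pathVert (lt_of_mem_pathIdx hb))
  rwa [← (Finset.mem_filter.1 hb).2, h.eq_of_mem i' _ harc.1]

lemma not_isExchangeArc_pathVert {b c : ℕ} (hc : c ∈ pathIdx π vs hne i) (hbc : b < c) :
    ¬ (M i).toMatroid.IsExchangeArc ↑(P i) (pathVert vs hne b) (pathVert vs hne (c + 1)) := by
  intro harc
  have hc' := lt_of_mem_pathIdx hc
  have hsc := ddist_le_add_one_of_adj_right (x := src) (compAdj_elt_elt_iff.2 ⟨i, harc⟩)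
  rw [(h.ddist_pathVert (by omega)).1, (h.ddist_pathVert (by omega)).1] at hsc
  norm_cast at hsc
  omega

lemma indep_and_closure_exchangedPart (i : ι) :
    (M i).toMatroid.Indep (exchangedPart P π vs hne i) ∧
      (M i).toMatroid.closure (exchangedPart P π vs hne i) = (M i).toMatroid.closure ↑(P i) :=
  (FinMatroid.toMatroid_indep_coe.2 (h.indep i)).indep_and_closure_eq_of_triangular
    (fun _ hb => h.isExchangeArc_pathVert hb) (fun _ _ _ hc => h.not_isExchangeArc_pathVert hc)

lemma indep_updatePartition (i : ι) : (M i).Indep (updatePartition P π vs hne j i) := by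
  obtain ⟨hJ, hcl⟩ := h.indep_and_closure_exchangedPart (hne := hne) i
  rw [← FinMatroid.toMatroid_indep_coe, coe_updatePartition]
  split_ifs with hij
  · subst hij
    rw [Set.union_singleton, hJ.insert_indep_iff, hcl]
    exact Or.inl ⟨trivial, (compAdj_elt_snk_iff (h.indep i)).1 h.compAdj_getLast⟩
  · rwa [Set.union_empty]

lemma compAdj_snk_of_updatePartition
    (hu : compAdj M (updatePartition P π vs hne j) (elt u) (snk i)) :
    compAdj M P (elt u) (snk i) := by
  rw [compAdj_elt_snk_iff (h.indep_updatePartition i)] at hu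
  rw [compAdj_elt_snk_iff (h.indep i), ← (h.indep_and_closure_exchangedPart i).2]
  refine fun hu' => hu (Matroid.closure_subset_closure _ ?_ hu')
  rw [coe_updatePartition]
  exact Set.subset_union_left

lemma exists_compAdj_snk_or_isExchangeArc
    (huz : compAdj M (updatePartition P π vs hne j) (elt u) (elt z)) :
    ∃ i, compAdj M P (elt u) (snk i) ∨
      (M i).toMatroid.IsExchangeArc (exchangedPart P π vs hne i) u z := by
  obtain ⟨i, harc⟩ := compAdj_elt_elt_iff.1 huz
  refine ⟨i, or_iff_not_imp_left.2 fun hu => ?_⟩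
  rw [compAdj_elt_snk_iff (h.indep i), not_not,
    ← (h.indep_and_closure_exchangedPart (hne := hne) i).2] at hu
  have hQ := FinMatroid.toMatroid_indep_coe.2 (h.indep_updatePartition (hne := hne) i)
  rw [coe_updatePartition] at harc hQ
  split_ifs at harc hQ
  · rw [Set.union_singleton] at harc hQ
    exact harc.of_insert hQ hu
  · rwa [Set.union_empty] at harc

lemma ddist_src_le_of_compAdj_updatePartition
    (huz : compAdj M (updatePartition P π vs hne j) (elt u) (elt z)) :
    ddist (compAdj M P) src (elt z) ≤ ddist (compAdj M P) src (elt u) + 1 ∨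
      ((vs.length + 1 : ℕ) : ℕ∞) ≤ ddist (compAdj M P) src (elt u) + 1 := by
  obtain ⟨i, hu | harc⟩ := h.exists_compAdj_snk_or_isExchangeArc huz
  · exact Or.inr ((h.iInf_ddist_src_snk ▸ iInf_le _ i).trans (ddist_le_add_one_of_adj_right hu))
  refine Or.inl (harc.le_add_one_of_triangular (FinMatroid.toMatroid_indep_coe.2 (h.indep i))
    (fun _ hb => h.isExchangeArc_pathVert hb) (fun _ _ _ hc => h.not_isExchangeArc_pathVert hc)
    (φ := fun v => ddist (compAdj M P) src (elt v))
    (fun _ _ hef => ddist_le_add_one_of_adj_right (compAdj_elt_elt_iff.2 ⟨i, hef⟩)) fun b hb => ?_)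
  have := lt_of_mem_pathIdx hb
  rw [(h.ddist_pathVert this).1, (h.ddist_pathVert (b := b) (by omega)).1]
  norm_cast

lemma iInf_ddist_snk_le_of_compAdj_updatePartition
    (huz : compAdj M (updatePartition P π vs hne j) (elt u) (elt z)) :
    (⨅ i, ddist (compAdj M P) (elt u) (snk i)) ≤
      (⨅ i, ddist (compAdj M P) (elt z) (snk i)) + 1 := by
  obtain ⟨i, hu | harc⟩ := h.exists_compAdj_snk_or_isExchangeArc huz
  · exact (iInf_le _ i).trans ((ddist_le_of_reachIn (reachIn_one hu)).trans (by simp))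
  refine harc.le_add_one_of_triangular' (FinMatroid.toMatroid_indep_coe.2 (h.indep i))
    (fun _ hb => h.isExchangeArc_pathVert hb) (fun _ _ _ hc => h.not_isExchangeArc_pathVert hc)
    (ψ := fun v => ⨅ i, ddist (compAdj M P) (elt v) (snk i))
    (fun _ _ hef => ?_) fun b hb => ?_
  · rw [ENat.iInf_add]
    exact iInf_mono fun _ => ddist_le_add_one_of_adj_left (compAdj_elt_elt_iff.2 ⟨i, hef⟩)
  · have := lt_of_mem_pathIdx hb
    rw [(h.ddist_pathVert this).2, (h.ddist_pathVert (b := b) (by omega)).2]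
    norm_cast
    omega

lemma min_ddist_src_le (v : V) :
    min (ddist (compAdj M P) src (elt v)) ((vs.length + 1 : ℕ) : ℕ∞) ≤
      ddist (compAdj M (updatePartition P π vs hne j)) src (elt v) := by
  let f : CVert V ι → ℕ∞
    | elt v => min (ddist (compAdj M P) src (elt v)) ((vs.length + 1 : ℕ) : ℕ∞)
    | _ => 0
  refine (le_add_ddist (f := f) (x := src) (y := elt v) ?_).trans_eq (zero_add _)
  rintro (a | _ | _) (b | _ | _) hab <;> try exact False.elim hab
  · exact min_le_min_add_one (h.ddist_src_le_of_compAdj_updatePartition hab)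
  · exact zero_le
  · exact (min_le_left _ _).trans ((ddist_le_of_reachIn
      (reachIn_one (compAdj_src_of_updatePartition hab))).trans (by simp [f]))

lemma min_iInf_ddist_snk_le (v : V) :
    min (⨅ i, ddist (compAdj M P) (elt v) (snk i)) ((vs.length + 1 : ℕ) : ℕ∞) ≤
      ⨅ i, ddist (compAdj M (updatePartition P π vs hne j)) (elt v) (snk i) := by
  let f : CVert V ι → ℕ∞
    | elt v => min (⨅ i, ddist (compAdj M P) (elt v) (snk i)) ((vs.length + 1 : ℕ) : ℕ∞)
    | _ => 0
  refine le_iInf fun i => (le_add_ddist' (f := f) (x := elt v) (y := snk i) ?_).trans_eq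
    (zero_add _)
  rintro (a | _ | _) (b | _ | i') hab <;> try exact False.elim hab
  · exact min_le_min_add_one (Or.inl (h.iInf_ddist_snk_le_of_compAdj_updatePartition hab))
  · exact (min_le_left _ _).trans ((iInf_le _ i').trans ((ddist_le_of_reachIn
      (reachIn_one (h.compAdj_snk_of_updatePartition hab))).trans (by simp [f])))
  · exact zero_le

end IsShortestAugPath

end Augmentation

theorem monotonicity_matroid_partition_general {V ι : Type*} [DecidableEq V] [Fintype V]
    [DecidableEq ι] [Fintype ι] (M : ι → FinMatroid V) (P : ι → Finset V)
    (hind : ∀ i, (M i).Indep (P i))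
    (π : V → ι) (hπ : ∀ i, ∀ v ∈ P i, π v = i)
    (j : ι) (vs : List V) (hne : vs ≠ [])
    (hchain : List.Chain' (compAdj M P)
      (CVert.src :: (vs.map CVert.elt ++ [CVert.snk j])))
    (hshort : (⨅ i : ι, ddist (compAdj M P) CVert.src (CVert.snk i))
      = ((vs.length + 1 : ℕ) : ℕ∞)) :
    ∀ v : V,
      (ddist (compAdj M P) CVert.src (CVert.elt v)
          < (⨅ i : ι, ddist (compAdj M P) CVert.src (CVert.snk i)) →
        ddist (compAdj M P) CVert.src (CVert.elt v)
          ≤ ddist (compAdj M (updatePartition P π vs hne j)) CVert.src (CVert.elt v)) ∧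
      ((⨅ i : ι, ddist (compAdj M P) (CVert.elt v) (CVert.snk i))
          < (⨅ i : ι, ddist (compAdj M P) CVert.src (CVert.snk i)) →
        (⨅ i : ι, ddist (compAdj M P) (CVert.elt v) (CVert.snk i))
          ≤ (⨅ i : ι, ddist (compAdj M (updatePartition P π vs hne j))
              (CVert.elt v) (CVert.snk i))) ∧
      ((⨅ i : ι, ddist (compAdj M P) CVert.src (CVert.snk i))
          ≤ ddist (compAdj M P) CVert.src (CVert.elt v) →
        (⨅ i : ι, ddist (compAdj M P) CVert.src (CVert.snk i))
          ≤ ddist (compAdj M (updatePartition P π vs hne j)) CVert.src (CVert.elt v)) ∧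
      ((⨅ i : ι, ddist (compAdj M P) CVert.src (CVert.snk i))
          ≤ (⨅ i : ι, ddist (compAdj M P) (CVert.elt v) (CVert.snk i)) →
        (⨅ i : ι, ddist (compAdj M P) CVert.src (CVert.snk i))
          ≤ (⨅ i : ι, ddist (compAdj M (updatePartition P π vs hne j))
              (CVert.elt v) (CVert.snk i))) := by
  have h : IsShortestAugPath M P π j vs := ⟨hind, hπ, hchain, hshort⟩
  intro v
  have hs := h.min_ddist_src_le (hne := hne) v
  have ht := h.min_iInf_ddist_snk_le (hne := hne) v
  rw [hshort]
  refine ⟨fun hlt => ?_, fun hlt => ?_, fun hge => ?_, fun hge => ?_⟩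
  · rwa [min_eq_left hlt.le] at hs
  · rwa [min_eq_left hlt.le] at ht
  · rwa [min_eq_right hge] at hs
  · rwa [min_eq_right hge] at ht

/-- Monotonicity lemma for matroid partition: after augmenting along a shortest
`(s,T)`-path of the compressed exchange graph, distances from `s` and to `T` do not
decrease (below the old `d(s,T)`). -/
theorem monotonicity_matroid_partition {V ι : Type*} [DecidableEq V] [Fintype V]
    [DecidableEq ι] [Fintype ι] (M : ι → FinMatroid V) (P : ι → Finset V) (S : Finset V)
    (hind : ∀ i, (M i).Indep (P i)) (hdisj : ∀ i j, i ≠ j → Disjoint (P i) (P j))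
    (hS : Finset.univ.biUnion P = S)
    (π : V → ι) (hπ : ∀ i, ∀ v ∈ P i, π v = i)
    (j : ι) (vs : List V) (hne : vs ≠ []) (hnd : vs.Nodup)
    (hchain : List.Chain' (compAdj M P)
      (CVert.src :: (vs.map CVert.elt ++ [CVert.snk j])))
    (hshort : (⨅ i : ι, ddist (compAdj M P) CVert.src (CVert.snk i))
      = ((vs.length + 1 : ℕ) : ℕ∞)) :
    ∀ v : V,
      (ddist (compAdj M P) CVert.src (CVert.elt v)
          < (⨅ i : ι, ddist (compAdj M P) CVert.src (CVert.snk i)) →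
        ddist (compAdj M P) CVert.src (CVert.elt v)
          ≤ ddist (compAdj M (updatePartition P π vs hne j)) CVert.src (CVert.elt v)) ∧
      ((⨅ i : ι, ddist (compAdj M P) (CVert.elt v) (CVert.snk i))
          < (⨅ i : ι, ddist (compAdj M P) CVert.src (CVert.snk i)) →
        (⨅ i : ι, ddist (compAdj M P) (CVert.elt v) (CVert.snk i))
          ≤ (⨅ i : ι, ddist (compAdj M (updatePartition P π vs hne j))
              (CVert.elt v) (CVert.snk i))) ∧
      ((⨅ i : ι, ddist (compAdj M P) CVert.src (CVert.snk i))
          ≤ ddist (compAdj M P) CVert.src (CVert.elt v) →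
        (⨅ i : ι, ddist (compAdj M P) CVert.src (CVert.snk i))
          ≤ ddist (compAdj M (updatePartition P π vs hne j)) CVert.src (CVert.elt v)) ∧
      ((⨅ i : ι, ddist (compAdj M P) CVert.src (CVert.snk i))
          ≤ (⨅ i : ι, ddist (compAdj M P) (CVert.elt v) (CVert.snk i)) →
        (⨅ i : ι, ddist (compAdj M P) CVert.src (CVert.snk i))
          ≤ (⨅ i : ι, ddist (compAdj M (updatePartition P π vs hne j))
              (CVert.elt v) (CVert.snk i))) :=
  monotonicity_matroid_partition_general M P hind π hπ j vs hne hchain hshort
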